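/- arXiv:2411.10204 — 9 statements merged into one kernel-verified Lean document; each statement's English description precedes it below -/
import Mathlib

section
/- Let γ* ∈ U(a,b) with barycentric projection T*(xₚ) = Σⱼ (γ*ₚⱼ/aₚ) yⱼ, let γ̂ ∈ U(a,a) be arbitrary, and let γᵢⱼ = Σₚ γ̂ᵢₚ γ*ₚⱼ/aₚ be the composite coupling. Then the Wasserstein transport cost satisfies Σᵢⱼ γᵢⱼ‖xᵢ − yⱼ‖² = Σᵢₚ γ̂ᵢₚ‖xᵢ − T*(xₚ)‖² + (Σⱼ bⱼ‖yⱼ‖² − Σₚ aₚ‖T*(xₚ)‖²). -/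
open scoped BigOperators

/-- `γ` is a coupling of the weight vectors `a` and `b`: nonnegative entries,
row sums `a`, column sums `b`. -/
def IsCoupling {n m : ℕ} (a : Fin n → ℝ) (b : Fin m → ℝ) (γ : Fin n → Fin m → ℝ) : Prop :=
  (∀ i j, 0 ≤ γ i j) ∧ (∀ i, ∑ j, γ i j = a i) ∧ (∀ j, ∑ i, γ i j = b j)

/-!
Conditioning the composite coupling on the middle index `p` turns its cost into a
`γ̂`-average of the costs of the probability vectors `γ*ₚ. / aₚ`. For each of them the
bias–variance decomposition splits the cost into the squared distance to the barycentre
`T*(xₚ)` plus a variance term independent of `i`; summing the variance terms against the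
column sums `aₚ` of `γ̂` gives `Σⱼ bⱼ‖yⱼ‖² − Σₚ aₚ‖T*(xₚ)‖²`.
-/

open Finset RealInnerProductSpace

section

variable {ι κ μ : Type*} [Fintype ι] [Fintype κ] [Fintype μ]

theorem sum_mul_norm_sub_sq_eq_of_sum_eq_one {E : Type*} [NormedAddCommGroup E]
    [InnerProductSpace ℝ E] (w : ι → ℝ) (hw : ∑ j, w j = 1) (y : ι → E) (x : E) :
    ∑ j, w j * ‖x - y j‖ ^ 2
      = ‖x - ∑ j, w j • y j‖ ^ 2 + (∑ j, w j * ‖y j‖ ^ 2 - ‖∑ j, w j • y j‖ ^ 2) := by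
  have hinner : ⟪x, ∑ j, w j • y j⟫ = ∑ j, w j * ⟪x, y j⟫ := by
    simp only [inner_sum, real_inner_smul_right]
  calc ∑ j, w j * ‖x - y j‖ ^ 2
      = ∑ j, (w j * ‖x‖ ^ 2 - 2 * (w j * ⟪x, y j⟫) + w j * ‖y j‖ ^ 2) := by
        refine sum_congr rfl fun j _ => ?_
        rw [norm_sub_sq_real]; ring
    _ = (∑ j, w j) * ‖x‖ ^ 2 - 2 * ∑ j, w j * ⟪x, y j⟫ + ∑ j, w j * ‖y j‖ ^ 2 := by
        rw [sum_add_distrib, sum_sub_distrib, ← sum_mul, ← mul_sum]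
    _ = _ := by rw [hw, ← hinner, norm_sub_sq_real]; ring

theorem sum_sum_composite_mul (g : ι → κ → ℝ) (s : κ → μ → ℝ) (c : ι → μ → ℝ) :
    ∑ i, ∑ j, (∑ p, g i p * s p j) * c i j = ∑ i, ∑ p, g i p * ∑ j, s p j * c i j := by
  refine sum_congr rfl fun i _ => ?_
  simp only [sum_mul, mul_sum, mul_assoc]
  exact sum_comm

theorem sum_sum_mul_add_eq (g : ι → κ → ℝ) (f : ι → κ → ℝ) (v : κ → ℝ) :
    ∑ i, ∑ p, g i p * (f i p + v p)
      = ∑ i, ∑ p, g i p * f i p + ∑ p, (∑ i, g i p) * v p := by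
  simp only [mul_add, sum_add_distrib, sum_mul]
  rw [sum_comm (f := fun i p => g i p * v p)]

theorem sum_mul_sum_div_sub_eq (a : κ → ℝ) (ha : ∀ p, a p ≠ 0) (s : κ → μ → ℝ)
    (c : μ → ℝ) (t : κ → ℝ) :
    ∑ p, a p * (∑ j, s p j / a p * c j - t p)
      = ∑ j, (∑ p, s p j) * c j - ∑ p, a p * t p := by
  have hcancel : ∀ p j, a p * (s p j / a p * c j) = s p j * c j := fun p j => by
    field_simp [ha p]
  simp only [mul_sub, mul_sum, hcancel, sum_sub_distrib, sum_mul]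
  rw [sum_comm]

end

theorem composite_coupling_cost_general {n m d : ℕ}
    (a : Fin n → ℝ) (b : Fin m → ℝ)
    (x : Fin n → EuclideanSpace ℝ (Fin d)) (y : Fin m → EuclideanSpace ℝ (Fin d))
    (ha : ∀ p, 0 < a p)
    (γstar : Fin n → Fin m → ℝ) (hγstar : IsCoupling a b γstar)
    (γhat : Fin n → Fin n → ℝ) (hγhat : IsCoupling a a γhat)
    (γ : Fin n → Fin m → ℝ)
    (hγ : ∀ i j, γ i j = ∑ p, γhat i p * γstar p j / a p)
    (Tstar : Fin n → EuclideanSpace ℝ (Fin d))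
    (hTstar : ∀ p, Tstar p = ∑ j, (γstar p j / a p) • y j) :
    ∑ i, ∑ j, γ i j * ‖x i - y j‖ ^ 2
      = ∑ i, ∑ p, γhat i p * ‖x i - Tstar p‖ ^ 2
        + (∑ j, b j * ‖y j‖ ^ 2 - ∑ p, a p * ‖Tstar p‖ ^ 2) := by
  obtain ⟨-, hstar_row, hstar_col⟩ := hγstar
  obtain ⟨-, -, hhat_col⟩ := hγhat
  have ha_ne : ∀ p, a p ≠ 0 := fun p => (ha p).ne'
  set V : Fin n → ℝ := fun p => ∑ j, γstar p j / a p * ‖y j‖ ^ 2 - ‖Tstar p‖ ^ 2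
  have hbias_var : ∀ i p,
      ∑ j, γstar p j / a p * ‖x i - y j‖ ^ 2 = ‖x i - Tstar p‖ ^ 2 + V p := fun i p => by
    have hw : ∑ j, γstar p j / a p = 1 := by rw [← sum_div, hstar_row, div_self (ha_ne p)]
    simp only [V, hTstar]
    exact sum_mul_norm_sub_sq_eq_of_sum_eq_one _ hw y (x i)
  calc ∑ i, ∑ j, γ i j * ‖x i - y j‖ ^ 2
      = ∑ i, ∑ p, γhat i p * ∑ j, γstar p j / a p * ‖x i - y j‖ ^ 2 := by
        simp only [hγ, mul_div_assoc]
        exact sum_sum_composite_mul _ _ _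
    _ = ∑ i, ∑ p, γhat i p * ‖x i - Tstar p‖ ^ 2 + ∑ p, a p * V p := by
        simp only [hbias_var, sum_sum_mul_add_eq, hhat_col]
    _ = _ := by
        simp only [V, sum_mul_sum_div_sub_eq a ha_ne, hstar_col]

theorem composite_coupling_cost {n m d : ℕ}
    (a : Fin n → ℝ) (b : Fin m → ℝ)
    (x : Fin n → EuclideanSpace ℝ (Fin d)) (y : Fin m → EuclideanSpace ℝ (Fin d))
    (ha : ∀ p, 0 < a p) (hasum : ∑ p, a p = 1)
    (hb : ∀ j, 0 ≤ b j) (hbsum : ∑ j, b j = 1)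
    (γstar : Fin n → Fin m → ℝ) (hγstar : IsCoupling a b γstar)
    (γhat : Fin n → Fin n → ℝ) (hγhat : IsCoupling a a γhat)
    (γ : Fin n → Fin m → ℝ)
    (hγ : ∀ i j, γ i j = ∑ p, γhat i p * γstar p j / a p)
    (Tstar : Fin n → EuclideanSpace ℝ (Fin d))
    (hTstar : ∀ p, Tstar p = ∑ j, (γstar p j / a p) • y j) :
    ∑ i, ∑ j, γ i j * ‖x i - y j‖ ^ 2
      = ∑ i, ∑ p, γhat i p * ‖x i - Tstar p‖ ^ 2
        + (∑ j, b j * ‖y j‖ ^ 2 - ∑ p, a p * ‖Tstar p‖ ^ 2) :=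
  composite_coupling_cost_general a b x y ha γstar hγstar γhat hγhat γ hγ Tstar hTstar
end

section
/- Suppose γ* ∈ U(a,b) minimizes the transport cost C(γ) = Σᵢⱼ γᵢⱼ‖xᵢ − yⱼ‖² over U(a,b), and let T*(xᵢ) = Σⱼ (γ*ᵢⱼ/aᵢ) yⱼ. Then the deterministic coupling γ̂* defined by γ̂*ᵢₚ = aᵢ if p = i and 0 otherwise minimizes Ĉ(γ̂) = Σᵢₚ γ̂ᵢₚ‖xᵢ − T*(xₚ)‖² over γ̂ ∈ U(a,a); i.e., W₂²(ν, T*_#ν) = Σᵢ aᵢ‖xᵢ − T*(xᵢ)‖². -/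
open scoped BigOperators

/-- Squared 2-Wasserstein distance between the finitely supported measures
`∑ i, a i • δ (x i)` and `∑ j, b j • δ (y j)`: the minimum quadratic transport
cost over couplings. -/
noncomputable def W2sq {n m d : ℕ} (a : Fin n → ℝ) (b : Fin m → ℝ)
    (x : Fin n → EuclideanSpace ℝ (Fin d)) (y : Fin m → EuclideanSpace ℝ (Fin d)) : ℝ :=
  sInf { c | ∃ γ : Fin n → Fin m → ℝ, IsCoupling a b γ ∧
    c = ∑ i, ∑ j, γ i j * ‖x i - y j‖ ^ 2 }

/-!
Let `K p j = γ* p j / a p` be the conditional law of `γ*` given the source point `x p`, so that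
`T* p` is the mean of `K p`. Averaging `‖u - y j‖²` over `K p` gives `‖u - T* p‖²` plus the
variance `V p` of `K p`. Hence gluing any `γ̂ ∈ U(a,a)` with `K` yields a coupling in `U(a,b)` of
cost `Ĉ(γ̂) + ∑ p, a p * V p`, while gluing the identity coupling with `K` gives back `γ*`.
The optimality of `γ*` therefore says that the identity coupling minimizes `Ĉ`.
-/

open Finset

theorem sum_mul_norm_sub_sq_eq_norm_sub_sq_add {E ι : Type*} [NormedAddCommGroup E]
    [InnerProductSpace ℝ E] [Fintype ι] (w : ι → ℝ) (y : ι → E) (u v : E)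
    (hw : ∑ j, w j = 1) (hv : v = ∑ j, w j • y j) :
    ∑ j, w j * ‖u - y j‖ ^ 2 = ‖u - v‖ ^ 2 + ∑ j, w j * ‖v - y j‖ ^ 2 := by
  have hcentered : ∑ j, w j • (v - y j) = 0 := by
    simp only [smul_sub, sum_sub_distrib, ← sum_smul, hw, one_smul, ← hv, sub_self]
  calc ∑ j, w j * ‖u - y j‖ ^ 2
      = ∑ j, (w j * ‖u - v‖ ^ 2 + 2 * inner ℝ (u - v) (w j • (v - y j))
          + w j * ‖v - y j‖ ^ 2) := by
        refine sum_congr rfl fun j _ => ?_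
        rw [← sub_add_sub_cancel u v (y j), norm_add_sq_real, real_inner_smul_right]
        ring
    _ = ‖u - v‖ ^ 2 + ∑ j, w j * ‖v - y j‖ ^ 2 := by
        rw [sum_add_distrib, sum_add_distrib, ← mul_sum, ← inner_sum, hcentered,
          inner_zero_right, ← sum_mul, hw]
        ring

section Coupling

variable {n m d : ℕ}

noncomputable def transportCost (γ : Fin n → Fin m → ℝ) (x : Fin n → EuclideanSpace ℝ (Fin d))
    (y : Fin m → EuclideanSpace ℝ (Fin d)) : ℝ :=
  ∑ i, ∑ j, γ i j * ‖x i - y j‖ ^ 2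

theorem transportCost_comp {k : ℕ} (γ : Fin n → Fin k → ℝ) (K : Fin k → Fin m → ℝ)
    (x : Fin n → EuclideanSpace ℝ (Fin d)) (y : Fin m → EuclideanSpace ℝ (Fin d))
    (T : Fin k → EuclideanSpace ℝ (Fin d)) (hK : ∀ p, ∑ j, K p j = 1)
    (hT : ∀ p, T p = ∑ j, K p j • y j) :
    transportCost (fun i j => ∑ p, γ i p * K p j) x y
      = transportCost γ x T + ∑ p, (∑ i, γ i p) * ∑ j, K p j * ‖T p - y j‖ ^ 2 := by
  have hrow : ∀ i, ∑ j, (∑ p, γ i p * K p j) * ‖x i - y j‖ ^ 2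
      = ∑ p, γ i p * (‖x i - T p‖ ^ 2 + ∑ j, K p j * ‖T p - y j‖ ^ 2) := by
    intro i
    simp only [← sum_mul_norm_sub_sq_eq_norm_sub_sq_add (K _) y (x i) _ (hK _) (hT _), mul_sum,
      sum_mul, mul_assoc]
    exact sum_comm
  calc transportCost (fun i j => ∑ p, γ i p * K p j) x y
      = ∑ i, ∑ p, γ i p * (‖x i - T p‖ ^ 2 + ∑ j, K p j * ‖T p - y j‖ ^ 2) :=
        sum_congr rfl fun i _ => hrow i
    _ = transportCost γ x T + ∑ p, (∑ i, γ i p) * ∑ j, K p j * ‖T p - y j‖ ^ 2 := by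
        simp only [mul_add, sum_add_distrib, sum_mul, transportCost]
        rw [sum_comm (f := fun i p => γ i p * ∑ j, K p j * ‖T p - y j‖ ^ 2)]

theorem IsCoupling.comp {k : ℕ} {a : Fin n → ℝ} {a' : Fin k → ℝ} {b : Fin m → ℝ}
    {γ : Fin n → Fin k → ℝ} {γ' : Fin k → Fin m → ℝ} (hγ : IsCoupling a a' γ)
    (hγ' : IsCoupling a' b γ') (ha' : ∀ p, 0 < a' p) :
    IsCoupling a b (fun i j => ∑ p, γ i p * (γ' p j / a' p)) := by
  obtain ⟨hγ_nonneg, hγ_row, hγ_col⟩ := hγ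
  obtain ⟨hγ'_nonneg, hγ'_row, hγ'_col⟩ := hγ'
  refine ⟨fun i j => sum_nonneg fun p _ =>
      mul_nonneg (hγ_nonneg i p) (div_nonneg (hγ'_nonneg p j) (ha' p).le), fun i => ?_,
    fun j => ?_⟩
  · rw [sum_comm, ← hγ_row i]
    refine sum_congr rfl fun p _ => ?_
    rw [← mul_sum, ← sum_div, hγ'_row p, div_self (ha' p).ne', mul_one]
  · rw [sum_comm, ← hγ'_col j]
    refine sum_congr rfl fun p _ => ?_
    rw [← sum_mul, hγ_col p, mul_div_cancel₀ _ (ha' p).ne']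

def identityCoupling (a : Fin n → ℝ) : Fin n → Fin n → ℝ :=
  fun i p => if i = p then a i else 0

theorem isCoupling_identityCoupling {a : Fin n → ℝ} (ha : ∀ i, 0 ≤ a i) :
    IsCoupling a a (identityCoupling a) := by
  refine ⟨fun i p => ?_, fun i => ?_, fun p => ?_⟩
  · by_cases h : i = p <;> simp [identityCoupling, h, ha]
  · simp [identityCoupling]
  · simp [identityCoupling]

theorem identityCoupling_comp_div (a : Fin n → ℝ) (γ : Fin n → Fin m → ℝ)
    (ha : ∀ i, a i ≠ 0) :
    (fun i j => ∑ p, identityCoupling a i p * (γ p j / a p)) = γ := by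
  ext i j
  simp [identityCoupling, mul_div_cancel₀ _ (ha i)]

theorem transportCost_identityCoupling (a : Fin n → ℝ)
    (x T : Fin n → EuclideanSpace ℝ (Fin d)) :
    transportCost (identityCoupling a) x T = ∑ i, a i * ‖x i - T i‖ ^ 2 := by
  simp [transportCost, identityCoupling]

theorem W2sq_eq_transportCost {a : Fin n → ℝ} {b : Fin m → ℝ}
    {x : Fin n → EuclideanSpace ℝ (Fin d)} {y : Fin m → EuclideanSpace ℝ (Fin d)}
    {γ : Fin n → Fin m → ℝ} (hγ : IsCoupling a b γ)
    (hopt : ∀ γ', IsCoupling a b γ' → transportCost γ x y ≤ transportCost γ' x y) :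
    W2sq a b x y = transportCost γ x y :=
  IsLeast.csInf_eq ⟨⟨γ, hγ, rfl⟩, by rintro _ ⟨γ', hγ', rfl⟩; exact hopt γ' hγ'⟩

theorem transportCost_identityCoupling_le_of_optimal {a : Fin n → ℝ} {b : Fin m → ℝ}
    {x : Fin n → EuclideanSpace ℝ (Fin d)} {y : Fin m → EuclideanSpace ℝ (Fin d)}
    {γ : Fin n → Fin m → ℝ} {T : Fin n → EuclideanSpace ℝ (Fin d)} (ha : ∀ i, 0 < a i)
    (hγ : IsCoupling a b γ)
    (hopt : ∀ γ', IsCoupling a b γ' → transportCost γ x y ≤ transportCost γ' x y)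
    (hT : ∀ i, T i = ∑ j, (γ i j / a i) • y j) {γhat : Fin n → Fin n → ℝ}
    (hγhat : IsCoupling a a γhat) :
    transportCost (identityCoupling a) x T ≤ transportCost γhat x T := by
  have hK : ∀ p, ∑ j, γ p j / a p = 1 := fun p => by
    rw [← sum_div, hγ.2.1 p, div_self (ha p).ne']
  have hglued := hopt _ (hγhat.comp hγ ha)
  nth_rw 1 [← identityCoupling_comp_div a γ fun p => (ha p).ne'] at hglued
  simp only [transportCost_comp _ _ x y T hK hT, hγhat.2.2,
    (isCoupling_identityCoupling fun i => (ha i).le).2.2] at hglued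
  linarith

end Coupling

theorem identity_coupling_optimal_for_projection_general {n m d : ℕ}
    (a : Fin n → ℝ) (b : Fin m → ℝ)
    (x : Fin n → EuclideanSpace ℝ (Fin d)) (y : Fin m → EuclideanSpace ℝ (Fin d))
    (ha : ∀ i, 0 < a i)
    (γstar : Fin n → Fin m → ℝ) (hγstar : IsCoupling a b γstar)
    (hopt : ∀ γ : Fin n → Fin m → ℝ, IsCoupling a b γ →
      ∑ i, ∑ j, γstar i j * ‖x i - y j‖ ^ 2 ≤ ∑ i, ∑ j, γ i j * ‖x i - y j‖ ^ 2)
    (Tstar : Fin n → EuclideanSpace ℝ (Fin d))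
    (hTstar : ∀ i, Tstar i = ∑ j, (γstar i j / a i) • y j) :
    (∀ γhat : Fin n → Fin n → ℝ, IsCoupling a a γhat →
      ∑ i, a i * ‖x i - Tstar i‖ ^ 2 ≤ ∑ i, ∑ p, γhat i p * ‖x i - Tstar p‖ ^ 2) ∧
    W2sq a a x Tstar = ∑ i, a i * ‖x i - Tstar i‖ ^ 2 := by
  have hid_le : ∀ γhat, IsCoupling a a γhat →
      transportCost (identityCoupling a) x Tstar ≤ transportCost γhat x Tstar :=
    fun _ hγhat => transportCost_identityCoupling_le_of_optimal ha hγstar hopt hTstar hγhat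
  rw [← transportCost_identityCoupling]
  exact ⟨hid_le,
    W2sq_eq_transportCost (isCoupling_identityCoupling fun i => (ha i).le) hid_le⟩

theorem identity_coupling_optimal_for_projection {n m d : ℕ}
    (a : Fin n → ℝ) (b : Fin m → ℝ)
    (x : Fin n → EuclideanSpace ℝ (Fin d)) (y : Fin m → EuclideanSpace ℝ (Fin d))
    (ha : ∀ i, 0 < a i) (hasum : ∑ i, a i = 1)
    (hb : ∀ j, 0 ≤ b j) (hbsum : ∑ j, b j = 1)
    (γstar : Fin n → Fin m → ℝ) (hγstar : IsCoupling a b γstar)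
    (hopt : ∀ γ : Fin n → Fin m → ℝ, IsCoupling a b γ →
      ∑ i, ∑ j, γstar i j * ‖x i - y j‖ ^ 2 ≤ ∑ i, ∑ j, γ i j * ‖x i - y j‖ ^ 2)
    (Tstar : Fin n → EuclideanSpace ℝ (Fin d))
    (hTstar : ∀ i, Tstar i = ∑ j, (γstar i j / a i) • y j) :
    (∀ γhat : Fin n → Fin n → ℝ, IsCoupling a a γhat →
      ∑ i, a i * ‖x i - Tstar i‖ ^ 2 ≤ ∑ i, ∑ p, γhat i p * ‖x i - Tstar p‖ ^ 2) ∧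
    W2sq a a x Tstar = ∑ i, a i * ‖x i - Tstar i‖ ^ 2 :=
  identity_coupling_optimal_for_projection_general a b x y ha γstar hγstar hopt Tstar hTstar
end

section
/- Let A ∈ ℝ^{n×n}, B ∈ ℝ^{m×m}, γ ∈ U(a,b) with aᵢ > 0, and define Cᵢₖ = Σⱼₗ (γᵢⱼ/aᵢ)(γₖₗ/aₖ) Bⱼₗ. Then the Gromov-Wasserstein cross term vanishes: Σᵢⱼₖₗ γᵢⱼ γₖₗ (Aᵢₖ − Cᵢₖ)(Cᵢₖ − Bⱼₗ) = 0. -/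
open scoped BigOperators

theorem gw_cross_term_vanishes {n m : ℕ}
    (a : Fin n → ℝ) (b : Fin m → ℝ)
    (A : Fin n → Fin n → ℝ) (B : Fin m → Fin m → ℝ)
    (γ : Fin n → Fin m → ℝ)
    (ha : ∀ i, 0 < a i) (hasum : ∑ i, a i = 1)
    (hb : ∀ j, 0 ≤ b j) (hbsum : ∑ j, b j = 1)
    (hγ : IsCoupling a b γ)
    (C : Fin n → Fin n → ℝ)
    (hC : ∀ i k, C i k = ∑ j, ∑ l, (γ i j / a i) * (γ k l / a k) * B j l) :
    ∑ i, ∑ j, ∑ k, ∑ l, γ i j * γ k l * (A i k - C i k) * (C i k - B j l) = 0 := by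
  obtain ⟨hpos, hrow, hcol⟩ := hγ
  have key : ∀ i k, ∑ j, ∑ l, γ i j * γ k l * (C i k - B j l) = 0 := by
    intro i k
    have hB : ∑ j, ∑ l, γ i j * γ k l * B j l = a i * a k * C i k := by
      rw [hC, Finset.mul_sum]
      apply Finset.sum_congr rfl; intro j _
      rw [Finset.mul_sum]
      apply Finset.sum_congr rfl; intro l _
      have hi := (ha i).ne'
      have hk := (ha k).ne'
      field_simp
    have expand : ∑ j, ∑ l, γ i j * γ k l * (C i k - B j l)
        = (∑ j, γ i j) * (∑ l, γ k l) * C i k - ∑ j, ∑ l, γ i j * γ k l * B j l := by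
      rw [Finset.sum_mul_sum, Finset.sum_mul, ← Finset.sum_sub_distrib]
      apply Finset.sum_congr rfl; intro j _
      rw [Finset.sum_mul, ← Finset.sum_sub_distrib]
      apply Finset.sum_congr rfl; intro l _
      ring
    rw [expand, hB, hrow, hrow]
    ring
  have swap : ∀ i : Fin n, ∑ j, ∑ k, ∑ l, γ i j * γ k l * (A i k - C i k) * (C i k - B j l)
      = ∑ k, ∑ j, ∑ l, γ i j * γ k l * (A i k - C i k) * (C i k - B j l) :=
    fun i => by rw [Finset.sum_comm]
  calc ∑ i, ∑ j, ∑ k, ∑ l, γ i j * γ k l * (A i k - C i k) * (C i k - B j l)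
      = ∑ i, ∑ k, (A i k - C i k) * ∑ j, ∑ l, γ i j * γ k l * (C i k - B j l) := by
        apply Finset.sum_congr rfl; intro i _
        rw [swap i]
        apply Finset.sum_congr rfl; intro k _
        rw [Finset.mul_sum]
        apply Finset.sum_congr rfl; intro j _
        rw [Finset.mul_sum]
        apply Finset.sum_congr rfl; intro l _
        ring
    _ = 0 := by simp [key]
end

section
/- Let A ∈ ℝ^{n×n}, B ∈ ℝ^{m×m}, γ ∈ U(a,b) with aᵢ > 0, and Cᵢₖ = Σⱼₗ (γᵢⱼ/aᵢ)(γₖₗ/aₖ) Bⱼₗ. Then the GW transport cost decomposes as Σᵢⱼₖₗ γᵢⱼ γₖₗ (Aᵢₖ − Bⱼₗ)² = Σᵢₖ aᵢ aₖ (Aᵢₖ − Cᵢₖ)² + Σᵢⱼₖₗ γᵢⱼ γₖₗ (Cᵢₖ − Bⱼₗ)². -/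
open scoped BigOperators

theorem gw_cost_decomposition {n m : ℕ}
    (a : Fin n → ℝ) (b : Fin m → ℝ)
    (A : Fin n → Fin n → ℝ) (B : Fin m → Fin m → ℝ)
    (γ : Fin n → Fin m → ℝ)
    (ha : ∀ i, 0 < a i) (hasum : ∑ i, a i = 1)
    (hb : ∀ j, 0 ≤ b j) (hbsum : ∑ j, b j = 1)
    (hγ : IsCoupling a b γ)
    (C : Fin n → Fin n → ℝ)
    (hC : ∀ i k, C i k = ∑ j, ∑ l, (γ i j / a i) * (γ k l / a k) * B j l) :
    ∑ i, ∑ j, ∑ k, ∑ l, γ i j * γ k l * (A i k - B j l) ^ 2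
      = ∑ i, ∑ k, a i * a k * (A i k - C i k) ^ 2
        + ∑ i, ∑ j, ∑ k, ∑ l, γ i j * γ k l * (C i k - B j l) ^ 2 := by
  obtain ⟨hpos, hrow, hcol⟩ := hγ
  have main : ∀ i k, ∑ j, ∑ l, γ i j * γ k l * (A i k - B j l) ^ 2
      = a i * a k * (A i k - C i k) ^ 2 + ∑ j, ∑ l, γ i j * γ k l * (C i k - B j l) ^ 2 := by
    intro i k
    have h0 : ∑ j, ∑ l, γ i j * γ k l = a i * a k := by
      calc ∑ j, ∑ l, γ i j * γ k l = ∑ j, γ i j * ∑ l, γ k l := by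
            simp [Finset.mul_sum]
        _ = a i * a k := by rw [← Finset.sum_mul, hrow, hrow]
    have h1 : ∑ j, ∑ l, γ i j * γ k l * B j l = a i * a k * C i k := by
      rw [hC, Finset.mul_sum]
      refine Finset.sum_congr rfl fun j _ => ?_
      rw [Finset.mul_sum]
      refine Finset.sum_congr rfl fun l _ => ?_
      field_simp [(ha i).ne', (ha k).ne']
    have e : ∀ (D : ℝ), ∑ j, ∑ l, γ i j * γ k l * (D - B j l) ^ 2
        = (∑ j, ∑ l, γ i j * γ k l) * D ^ 2
          - 2 * D * (∑ j, ∑ l, γ i j * γ k l * B j l)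
          + ∑ j, ∑ l, γ i j * γ k l * (B j l) ^ 2 := by
      intro D
      rw [Finset.sum_mul, Finset.mul_sum, ← Finset.sum_sub_distrib, ← Finset.sum_add_distrib]
      refine Finset.sum_congr rfl fun j _ => ?_
      rw [Finset.sum_mul, Finset.mul_sum, ← Finset.sum_sub_distrib, ← Finset.sum_add_distrib]
      refine Finset.sum_congr rfl fun l _ => ?_
      ring
    rw [e (A i k), e (C i k), h0, h1]
    ring
  calc ∑ i, ∑ j, ∑ k, ∑ l, γ i j * γ k l * (A i k - B j l) ^ 2
      = ∑ i, ∑ k, ∑ j, ∑ l, γ i j * γ k l * (A i k - B j l) ^ 2 :=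
        Finset.sum_congr rfl fun i _ => by rw [Finset.sum_comm]
    _ = ∑ i, ∑ k, (a i * a k * (A i k - C i k) ^ 2
          + ∑ j, ∑ l, γ i j * γ k l * (C i k - B j l) ^ 2) :=
        Finset.sum_congr rfl fun i _ => Finset.sum_congr rfl fun k _ => main i k
    _ = ∑ i, ∑ k, a i * a k * (A i k - C i k) ^ 2
          + ∑ i, ∑ k, ∑ j, ∑ l, γ i j * γ k l * (C i k - B j l) ^ 2 := by
        rw [← Finset.sum_add_distrib]
        exact Finset.sum_congr rfl fun i _ => Finset.sum_add_distrib
    _ = ∑ i, ∑ k, a i * a k * (A i k - C i k) ^ 2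
          + ∑ i, ∑ j, ∑ k, ∑ l, γ i j * γ k l * (C i k - B j l) ^ 2 := by
        congr 1
        exact Finset.sum_congr rfl fun i _ => by rw [Finset.sum_comm]
end

section
/- With γ ∈ U(a,b), aᵢ > 0, and Cᵢₖ = Σⱼₗ (γᵢⱼ/aᵢ)(γₖₗ/aₖ) Bⱼₗ, the probabilistic GW component equals the difference of squared 2-diameters: Σᵢⱼₖₗ γᵢⱼ γₖₗ (Cᵢₖ − Bⱼₗ)² = Σⱼₗ bⱼ bₗ Bⱼₗ² − Σᵢₖ aᵢ aₖ Cᵢₖ². -/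
open scoped BigOperators

theorem gw_probabilistic_component_eq_diameter_difference {n m : ℕ}
    (a : Fin n → ℝ) (b : Fin m → ℝ)
    (B : Fin m → Fin m → ℝ)
    (γ : Fin n → Fin m → ℝ)
    (ha : ∀ i, 0 < a i) (hasum : ∑ i, a i = 1)
    (hb : ∀ j, 0 ≤ b j) (hbsum : ∑ j, b j = 1)
    (hγ : IsCoupling a b γ)
    (C : Fin n → Fin n → ℝ)
    (hC : ∀ i k, C i k = ∑ j, ∑ l, (γ i j / a i) * (γ k l / a k) * B j l) :
    ∑ i, ∑ j, ∑ k, ∑ l, γ i j * γ k l * (C i k - B j l) ^ 2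
      = ∑ j, ∑ l, b j * b l * B j l ^ 2 - ∑ i, ∑ k, a i * a k * C i k ^ 2 := by
  obtain ⟨hpos, hrow, hcol⟩ := hγ
  -- key identity: a i * a k * C i k = ∑ j l, γ i j * γ k l * B j l
  have hC' : ∀ i k, a i * a k * C i k = ∑ j, ∑ l, γ i j * γ k l * B j l := by
    intro i k
    rw [hC, Finset.mul_sum]
    refine Finset.sum_congr rfl fun j _ => ?_
    rw [Finset.mul_sum]
    refine Finset.sum_congr rfl fun l _ => ?_
    field_simp [(ha i).ne', (ha k).ne']
  -- per (i,k) identity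
  have main : ∀ i k, ∑ j, ∑ l, γ i j * γ k l * (C i k - B j l) ^ 2
      = (∑ j, ∑ l, γ i j * γ k l * B j l ^ 2) - a i * a k * C i k ^ 2 := by
    intro i k
    have expand : ∀ j l, γ i j * γ k l * (C i k - B j l) ^ 2
        = γ i j * γ k l * C i k ^ 2 - 2 * C i k * (γ i j * γ k l * B j l)
          + γ i j * γ k l * B j l ^ 2 := fun j l => by ring
    have h1 : ∑ j, ∑ l, γ i j * γ k l * C i k ^ 2 = a i * a k * C i k ^ 2 := by
      simp_rw [mul_assoc, ← Finset.mul_sum, ← Finset.sum_mul, hrow]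
    simp_rw [expand, Finset.sum_add_distrib, Finset.sum_sub_distrib, ← Finset.mul_sum]
    rw [h1, ← hC' i k]
    ring
  -- marginal identity for the B² term
  have key : ∀ j l, ∑ i, ∑ k, γ i j * γ k l * B j l ^ 2 = b j * b l * B j l ^ 2 := by
    intro j l
    simp_rw [mul_assoc, ← Finset.mul_sum, ← Finset.sum_mul, hcol]
  -- reorder the sums on the LHS to i, k, j, l
  have reorder : ∑ i, ∑ j, ∑ k, ∑ l, γ i j * γ k l * (C i k - B j l) ^ 2
      = ∑ i, ∑ k, ∑ j, ∑ l, γ i j * γ k l * (C i k - B j l) ^ 2 :=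
    Finset.sum_congr rfl fun i _ => Finset.sum_comm
  rw [reorder]
  simp_rw [main, Finset.sum_sub_distrib]
  congr 1
  -- swap quadruple sum: ∑ i k j l → ∑ j l i k
  calc ∑ i, ∑ k, ∑ j, ∑ l, γ i j * γ k l * B j l ^ 2
      = ∑ i, ∑ j, ∑ k, ∑ l, γ i j * γ k l * B j l ^ 2 :=
        Finset.sum_congr rfl fun i _ => Finset.sum_comm
    _ = ∑ j, ∑ i, ∑ k, ∑ l, γ i j * γ k l * B j l ^ 2 := Finset.sum_comm
    _ = ∑ j, ∑ i, ∑ l, ∑ k, γ i j * γ k l * B j l ^ 2 :=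
        Finset.sum_congr rfl fun j _ => Finset.sum_congr rfl fun i _ => Finset.sum_comm
    _ = ∑ j, ∑ l, ∑ i, ∑ k, γ i j * γ k l * B j l ^ 2 :=
        Finset.sum_congr rfl fun j _ => Finset.sum_comm
    _ = ∑ j, ∑ l, b j * b l * B j l ^ 2 :=
        Finset.sum_congr rfl fun j _ => Finset.sum_congr rfl fun l _ => key j l
end

section
/- Let γ* ∈ U(a,b), C*ₚq = Σⱼₗ (γ*ₚⱼ/aₚ)(γ*qₗ/a_q) Bⱼₗ, let γ̂ ∈ U(a,a) be arbitrary, and define the composite coupling γᵢⱼ = Σₚ γ̂ᵢₚ γ*ₚⱼ/aₚ. Then Σᵢⱼₖₗ γᵢⱼ γₖₗ (Aᵢₖ − Bⱼₗ)² = Σᵢₚₖq γ̂ᵢₚ γ̂ₖq (Aᵢₖ − C*ₚq)² + (Σⱼₗ bⱼ bₗ Bⱼₗ² − Σₚq aₚ a_q (C*ₚq)²). -/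
open scoped BigOperators

private lemma gw_swap23 {α β γ : Type*} [Fintype α] [Fintype β] [Fintype γ]
    (f : α → β → γ → ℝ) :
    ∑ a, ∑ b, ∑ c, f a b c = ∑ a, ∑ c, ∑ b, f a b c :=
  Finset.sum_congr rfl fun _ _ => Finset.sum_comm

private lemma gw_reorder4 {α β : Type*} [Fintype α] [Fintype β]
    (f : α → α → β → β → ℝ) :
    ∑ i, ∑ k, ∑ j, ∑ l, f i k j l = ∑ j, ∑ l, ∑ i, ∑ k, f i k j l := by
  calc ∑ i, ∑ k, ∑ j, ∑ l, f i k j l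
      = ∑ i, ∑ j, ∑ k, ∑ l, f i k j l := gw_swap23 _
    _ = ∑ j, ∑ i, ∑ k, ∑ l, f i k j l := Finset.sum_comm
    _ = ∑ j, ∑ i, ∑ l, ∑ k, f i k j l :=
        Finset.sum_congr rfl fun _ _ => gw_swap23 _
    _ = ∑ j, ∑ l, ∑ i, ∑ k, f i k j l :=
        Finset.sum_congr rfl fun _ _ => Finset.sum_comm

private lemma gw_factor {α β : Type*} [Fintype α] [Fintype β]
    (g : α → β → ℝ) (h : β → β → ℝ) :
    ∑ i, ∑ k, ∑ j, ∑ l, g i j * g k l * h j l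
      = ∑ j, ∑ l, (∑ i, g i j) * (∑ k, g k l) * h j l := by
  have step : ∀ j l, (∑ i, g i j) * (∑ k, g k l) * h j l
      = ∑ i, ∑ k, g i j * g k l * h j l := by
    intro j l
    rw [Finset.sum_mul_sum, Finset.sum_mul]
    exact Finset.sum_congr rfl fun i _ => by rw [Finset.sum_mul]
  simp only [step]
  exact gw_reorder4 _

theorem gw_composite_coupling_cost {n m : ℕ}
    (a : Fin n → ℝ) (b : Fin m → ℝ)
    (A : Fin n → Fin n → ℝ) (B : Fin m → Fin m → ℝ)
    (ha : ∀ p, 0 < a p) (hasum : ∑ p, a p = 1)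
    (hb : ∀ j, 0 ≤ b j) (hbsum : ∑ j, b j = 1)
    (γstar : Fin n → Fin m → ℝ) (hγstar : IsCoupling a b γstar)
    (γhat : Fin n → Fin n → ℝ) (hγhat : IsCoupling a a γhat)
    (γ : Fin n → Fin m → ℝ)
    (hγ : ∀ i j, γ i j = ∑ p, γhat i p * γstar p j / a p)
    (Cstar : Fin n → Fin n → ℝ)
    (hCstar : ∀ p q, Cstar p q = ∑ j, ∑ l, (γstar p j / a p) * (γstar q l / a q) * B j l) :
    ∑ i, ∑ j, ∑ k, ∑ l, γ i j * γ k l * (A i k - B j l) ^ 2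
      = ∑ i, ∑ p, ∑ k, ∑ q, γhat i p * γhat k q * (A i k - Cstar p q) ^ 2
        + (∑ j, ∑ l, b j * b l * B j l ^ 2 - ∑ p, ∑ q, a p * a q * Cstar p q ^ 2) := by
  obtain ⟨hsnn, hsrow, hscol⟩ := hγstar
  obtain ⟨hhnn, hhrow, hhcol⟩ := hγhat
  have hane : ∀ p, a p ≠ 0 := fun p => (ha p).ne'
  -- marginals of γ
  have hrow : ∀ i, ∑ j, γ i j = a i := by
    intro i
    simp only [hγ]
    rw [Finset.sum_comm]
    have : ∀ p : Fin n, ∑ j, γhat i p * γstar p j / a p = γhat i p := by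
      intro p
      rw [← Finset.sum_div, ← Finset.mul_sum, hsrow p,
        mul_div_assoc, div_self (hane p), mul_one]
    simp only [this, hhrow]
  have hcol : ∀ j, ∑ i, γ i j = b j := by
    intro j
    simp only [hγ]
    rw [Finset.sum_comm]
    have : ∀ p : Fin n, ∑ i, γhat i p * γstar p j / a p = γstar p j := by
      intro p
      simp only [mul_div_assoc]
      rw [← Finset.sum_mul, hhcol p, mul_comm, div_mul_cancel₀ _ (hane p)]
    simp only [this, hscol]
  -- cross term identity
  have cross : ∀ i k, ∑ j, ∑ l, γ i j * γ k l * B j l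
      = ∑ p, ∑ q, γhat i p * γhat k q * Cstar p q := by
    intro i k
    have lhs1 : ∀ (j : Fin m) (l : Fin m), γ i j * γ k l * B j l
        = ∑ p, ∑ q, (γhat i p * γstar p j / a p) * (γhat k q * γstar q l / a q) * B j l := by
      intro j l
      rw [hγ i j, hγ k l, Finset.sum_mul_sum, Finset.sum_mul]
      exact Finset.sum_congr rfl fun p _ => by rw [Finset.sum_mul]
    have rhs1 : ∀ (p q : Fin n), γhat i p * γhat k q * Cstar p q
        = ∑ j, ∑ l, (γhat i p * γstar p j / a p) * (γhat k q * γstar q l / a q) * B j l := by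
      intro p q
      rw [hCstar p q, Finset.mul_sum]
      refine Finset.sum_congr rfl fun j _ => ?_
      rw [Finset.mul_sum]
      refine Finset.sum_congr rfl fun l _ => ?_
      ring
    simp only [lhs1, rhs1]
    exact gw_reorder4 _
  -- expansion of the left inner double sum
  have expand1 : ∀ i k, ∑ j, ∑ l, γ i j * γ k l * (A i k - B j l) ^ 2
      = A i k ^ 2 * (a i * a k)
        - 2 * A i k * (∑ p, ∑ q, γhat i p * γhat k q * Cstar p q)
        + ∑ j, ∑ l, γ i j * γ k l * B j l ^ 2 := by
    intro i k
    have e : ∀ (j l : Fin m), γ i j * γ k l * (A i k - B j l) ^ 2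
        = A i k ^ 2 * (γ i j * γ k l) - 2 * A i k * (γ i j * γ k l * B j l)
          + γ i j * γ k l * B j l ^ 2 := fun j l => by ring
    simp only [e, Finset.sum_add_distrib, Finset.sum_sub_distrib, ← Finset.mul_sum]
    rw [← cross i k]
    have h1 : ∑ j, γ i j * ∑ l, γ k l = a i * a k := by
      rw [hrow k, ← Finset.sum_mul, hrow i]
    rw [h1]
  -- expansion of the right inner double sum
  have expand2 : ∀ i k, ∑ p, ∑ q, γhat i p * γhat k q * (A i k - Cstar p q) ^ 2
      = A i k ^ 2 * (a i * a k)
        - 2 * A i k * (∑ p, ∑ q, γhat i p * γhat k q * Cstar p q)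
        + ∑ p, ∑ q, γhat i p * γhat k q * Cstar p q ^ 2 := by
    intro i k
    have e : ∀ (p q : Fin n), γhat i p * γhat k q * (A i k - Cstar p q) ^ 2
        = A i k ^ 2 * (γhat i p * γhat k q)
          - 2 * A i k * (γhat i p * γhat k q * Cstar p q)
          + γhat i p * γhat k q * Cstar p q ^ 2 := fun p q => by ring
    simp only [e, Finset.sum_add_distrib, Finset.sum_sub_distrib, ← Finset.mul_sum]
    have h1 : ∑ p, γhat i p * ∑ q, γhat k q = a i * a k := by
      rw [hhrow k, ← Finset.sum_mul, hhrow i]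
    rw [h1]
  -- marginalized square terms
  have hU : ∑ i, ∑ k, ∑ j, ∑ l, γ i j * γ k l * B j l ^ 2
      = ∑ j, ∑ l, b j * b l * B j l ^ 2 := by
    rw [gw_factor γ (fun j l => B j l ^ 2)]
    simp only [hcol]
  have hV : ∑ i, ∑ k, ∑ p, ∑ q, γhat i p * γhat k q * Cstar p q ^ 2
      = ∑ p, ∑ q, a p * a q * Cstar p q ^ 2 := by
    rw [gw_factor γhat (fun p q => Cstar p q ^ 2)]
    simp only [hhcol]
  -- reorder the quadruple sums in the goal
  have goalL : ∑ i, ∑ j, ∑ k, ∑ l, γ i j * γ k l * (A i k - B j l) ^ 2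
      = ∑ i, ∑ k, ∑ j, ∑ l, γ i j * γ k l * (A i k - B j l) ^ 2 :=
    Finset.sum_congr rfl fun _ _ => Finset.sum_comm
  have goalR : ∑ i, ∑ p, ∑ k, ∑ q, γhat i p * γhat k q * (A i k - Cstar p q) ^ 2
      = ∑ i, ∑ k, ∑ p, ∑ q, γhat i p * γhat k q * (A i k - Cstar p q) ^ 2 :=
    Finset.sum_congr rfl fun _ _ => Finset.sum_comm
  rw [goalL, goalR]
  simp only [expand1, expand2, Finset.sum_add_distrib, Finset.sum_sub_distrib]
  rw [hU, hV]
  ring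
end

section
/- Suppose γ* minimizes the GW cost C_{GW}(γ) = Σᵢⱼₖₗ γᵢⱼ γₖₗ (Aᵢₖ − Bⱼₗ)² over U(a,b), aᵢ > 0, and let C*ᵢₖ = Σⱼₗ (γ*ᵢⱼ/aᵢ)(γ*ₖₗ/aₖ) Bⱼₗ. Then the identity coupling diag(a) minimizes Σᵢₚₖq γ̂ᵢₚ γ̂ₖq (Aᵢₖ − C*ₚq)² over γ̂ ∈ U(a,a); i.e., GW₂²((X,A,a),(X,C*,a)) = Σᵢₖ aᵢ aₖ (Aᵢₖ − C*ᵢₖ)². -/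
open scoped BigOperators

/-- Squared 2-Gromov-Wasserstein distance between finite measure networks
`(X, A, a)` and `(Y, B, b)`: the minimum GW transport cost over couplings. -/
noncomputable def GW2sq {n m : ℕ} (a : Fin n → ℝ) (b : Fin m → ℝ)
    (A : Fin n → Fin n → ℝ) (B : Fin m → Fin m → ℝ) : ℝ :=
  sInf { c | ∃ γ : Fin n → Fin m → ℝ, IsCoupling a b γ ∧
    c = ∑ i, ∑ j, ∑ k, ∑ l, γ i j * γ k l * (A i k - B j l) ^ 2 }

section Aux

variable {α β σ : Type*} [Fintype α] [Fintype β] [Fintype σ]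

private lemma sum_swap4 {δ₁ δ₂ δ₃ δ₄ : Type*} [Fintype δ₁] [Fintype δ₂] [Fintype δ₃]
    [Fintype δ₄] (f : δ₁ → δ₂ → δ₃ → δ₄ → ℝ) :
    ∑ a, ∑ b, ∑ c, ∑ d, f a b c d = ∑ c, ∑ d, ∑ a, ∑ b, f a b c d := by
  calc ∑ a, ∑ b, ∑ c, ∑ d, f a b c d
      = ∑ a, ∑ c, ∑ b, ∑ d, f a b c d :=
        Finset.sum_congr rfl fun a _ => Finset.sum_comm
    _ = ∑ c, ∑ a, ∑ b, ∑ d, f a b c d := Finset.sum_comm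
    _ = ∑ c, ∑ a, ∑ d, ∑ b, f a b c d :=
        Finset.sum_congr rfl fun c _ =>
          Finset.sum_congr rfl fun a _ => Finset.sum_comm
    _ = ∑ c, ∑ d, ∑ a, ∑ b, f a b c d :=
        Finset.sum_congr rfl fun c _ => Finset.sum_comm

private lemma marginal_factor (γ : α → β → ℝ) (r : α → ℝ)
    (hr : ∀ i, ∑ j, γ i j = r i) (f : α → α → ℝ) :
    ∑ i, ∑ j, ∑ k, ∑ l, γ i j * γ k l * f i k = ∑ i, ∑ k, r i * r k * f i k := by
  refine Finset.sum_congr rfl fun i _ => ?_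
  rw [Finset.sum_comm]
  refine Finset.sum_congr rfl fun k _ => ?_
  calc ∑ j, ∑ l, γ i j * γ k l * f i k
      = ∑ j, γ i j * (r k * f i k) := by
        refine Finset.sum_congr rfl fun j _ => ?_
        calc ∑ l, γ i j * γ k l * f i k
            = ∑ l, γ k l * (γ i j * f i k) :=
              Finset.sum_congr rfl fun l _ => by ring
          _ = (∑ l, γ k l) * (γ i j * f i k) := (Finset.sum_mul _ _ _).symm
          _ = γ i j * (r k * f i k) := by rw [hr k]; ring
    _ = (∑ j, γ i j) * (r k * f i k) := (Finset.sum_mul _ _ _).symm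
    _ = r i * r k * f i k := by rw [hr i]; ring

private lemma marginal_factor_col (γ : α → β → ℝ) (c : β → ℝ)
    (hc : ∀ j, ∑ i, γ i j = c j) (g : β → β → ℝ) :
    ∑ i, ∑ j, ∑ k, ∑ l, γ i j * γ k l * g j l = ∑ j, ∑ l, c j * c l * g j l := by
  calc ∑ i, ∑ j, ∑ k, ∑ l, γ i j * γ k l * g j l
      = ∑ j, ∑ i, ∑ k, ∑ l, γ i j * γ k l * g j l := Finset.sum_comm
    _ = ∑ j, ∑ i, ∑ l, ∑ k, γ i j * γ k l * g j l :=
        Finset.sum_congr rfl fun j _ =>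
          Finset.sum_congr rfl fun i _ => Finset.sum_comm
    _ = ∑ j, ∑ l, c j * c l * g j l := marginal_factor (fun j i => γ i j) c hc g

private lemma gw_expand (γ : α → β → ℝ) (r : α → ℝ) (c : β → ℝ)
    (hr : ∀ i, ∑ j, γ i j = r i) (hc : ∀ j, ∑ i, γ i j = c j)
    (P : α → α → ℝ) (Q : β → β → ℝ) :
    ∑ i, ∑ j, ∑ k, ∑ l, γ i j * γ k l * (P i k - Q j l) ^ 2
      = (∑ i, ∑ k, r i * r k * P i k ^ 2)
        - 2 * (∑ i, ∑ j, ∑ k, ∑ l, γ i j * γ k l * (P i k * Q j l))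
        + ∑ j, ∑ l, c j * c l * Q j l ^ 2 := by
  have key : ∀ i j k l, γ i j * γ k l * (P i k - Q j l) ^ 2
      = γ i j * γ k l * P i k ^ 2 - 2 * (γ i j * γ k l * (P i k * Q j l))
        + γ i j * γ k l * Q j l ^ 2 := fun i j k l => by ring
  simp only [key, Finset.sum_add_distrib, Finset.sum_sub_distrib, ← Finset.mul_sum]
  rw [marginal_factor γ r hr fun i k => P i k ^ 2,
      marginal_factor_col γ c hc fun j l => Q j l ^ 2]

private lemma cross_eq (γhat : α → σ → ℝ) (e : σ → β → ℝ) (P : α → α → ℝ)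
    (B : β → β → ℝ) :
    ∑ i, ∑ p, ∑ k, ∑ q, γhat i p * γhat k q *
        (P i k * (∑ j, ∑ l, e p j * e q l * B j l))
      = ∑ i, ∑ j, ∑ k, ∑ l,
          (∑ p, γhat i p * e p j) * (∑ q, γhat k q * e q l) * (P i k * B j l) := by
  have lhs : ∑ i, ∑ p, ∑ k, ∑ q, γhat i p * γhat k q *
        (P i k * (∑ j, ∑ l, e p j * e q l * B j l))
      = ∑ i, ∑ k, ∑ p, ∑ q, ∑ j, ∑ l,
          γhat i p * e p j * (γhat k q * e q l) * (P i k * B j l) := by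
    refine Finset.sum_congr rfl fun i _ => ?_
    rw [Finset.sum_comm]
    refine Finset.sum_congr rfl fun k _ =>
      Finset.sum_congr rfl fun p _ => Finset.sum_congr rfl fun q _ => ?_
    simp only [Finset.mul_sum]
    exact Finset.sum_congr rfl fun j _ =>
      Finset.sum_congr rfl fun l _ => by ring
  have rhs : ∑ i, ∑ j, ∑ k, ∑ l,
        (∑ p, γhat i p * e p j) * (∑ q, γhat k q * e q l) * (P i k * B j l)
      = ∑ i, ∑ k, ∑ j, ∑ l, ∑ p, ∑ q,
          γhat i p * e p j * (γhat k q * e q l) * (P i k * B j l) := by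
    refine Finset.sum_congr rfl fun i _ => ?_
    rw [Finset.sum_comm]
    refine Finset.sum_congr rfl fun k _ =>
      Finset.sum_congr rfl fun j _ => Finset.sum_congr rfl fun l _ => ?_
    simp only [Finset.sum_mul, Finset.mul_sum]
    rw [Finset.sum_comm]
  rw [lhs, rhs]
  exact Finset.sum_congr rfl fun i _ => Finset.sum_congr rfl fun k _ =>
    sum_swap4 _

end Aux

theorem gw_identity_coupling_optimal_for_projection {n m : ℕ}
    (a : Fin n → ℝ) (b : Fin m → ℝ)
    (A : Fin n → Fin n → ℝ) (B : Fin m → Fin m → ℝ)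
    (ha : ∀ i, 0 < a i) (hasum : ∑ i, a i = 1)
    (hb : ∀ j, 0 ≤ b j) (hbsum : ∑ j, b j = 1)
    (γstar : Fin n → Fin m → ℝ) (hγstar : IsCoupling a b γstar)
    (hopt : ∀ γ : Fin n → Fin m → ℝ, IsCoupling a b γ →
      ∑ i, ∑ j, ∑ k, ∑ l, γstar i j * γstar k l * (A i k - B j l) ^ 2
        ≤ ∑ i, ∑ j, ∑ k, ∑ l, γ i j * γ k l * (A i k - B j l) ^ 2)
    (Cstar : Fin n → Fin n → ℝ)
    (hCstar : ∀ i k, Cstar i k = ∑ j, ∑ l, (γstar i j / a i) * (γstar k l / a k) * B j l) :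
    (∀ γhat : Fin n → Fin n → ℝ, IsCoupling a a γhat →
      ∑ i, ∑ k, a i * a k * (A i k - Cstar i k) ^ 2
        ≤ ∑ i, ∑ p, ∑ k, ∑ q, γhat i p * γhat k q * (A i k - Cstar p q) ^ 2) ∧
    GW2sq a a A Cstar = ∑ i, ∑ k, a i * a k * (A i k - Cstar i k) ^ 2 := by
  obtain ⟨hγpos, hγrow, hγcol⟩ := hγstar
  -- abbreviations
  set SA := ∑ i, ∑ k, a i * a k * A i k ^ 2 with hSA
  set SC := ∑ j, ∑ l, a j * a l * Cstar j l ^ 2 with hSC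
  set SB := ∑ j, ∑ l, b j * b l * B j l ^ 2 with hSB
  set Xstar := ∑ i, ∑ j, ∑ k, ∑ l, γstar i j * γstar k l * (A i k * B j l) with hXstar
  -- step (4): the diagonal cross term equals Xstar
  have hdiag : ∑ i, ∑ k, a i * a k * (A i k * Cstar i k) = Xstar := by
    rw [hXstar]
    calc ∑ i, ∑ k, a i * a k * (A i k * Cstar i k)
        = ∑ i, ∑ k, ∑ j, ∑ l, γstar i j * γstar k l * (A i k * B j l) := by
          refine Finset.sum_congr rfl fun i _ => Finset.sum_congr rfl fun k _ => ?_
          rw [hCstar i k]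
          simp only [Finset.mul_sum]
          refine Finset.sum_congr rfl fun j _ =>
            Finset.sum_congr rfl fun l _ => ?_
          have hi := (ha i).ne'
          have hk := (ha k).ne'
          field_simp
      _ = ∑ i, ∑ j, ∑ k, ∑ l, γstar i j * γstar k l * (A i k * B j l) :=
          Finset.sum_congr rfl fun i _ => Finset.sum_comm
  -- expansion of target value
  have htarget : ∑ i, ∑ k, a i * a k * (A i k - Cstar i k) ^ 2
      = SA - 2 * Xstar + SC := by
    have key : ∀ i k, a i * a k * (A i k - Cstar i k) ^ 2
        = a i * a k * A i k ^ 2 - 2 * (a i * a k * (A i k * Cstar i k))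
          + a i * a k * Cstar i k ^ 2 := fun i k => by ring
    simp only [key, Finset.sum_add_distrib, Finset.sum_sub_distrib, ← Finset.mul_sum]
    rw [hdiag]
  -- main inequality
  have main : ∀ γhat : Fin n → Fin n → ℝ, IsCoupling a a γhat →
      ∑ i, ∑ k, a i * a k * (A i k - Cstar i k) ^ 2
        ≤ ∑ i, ∑ p, ∑ k, ∑ q, γhat i p * γhat k q * (A i k - Cstar p q) ^ 2 := by
    rintro γhat ⟨hpos, hrow, hcol⟩
    set γ' : Fin n → Fin m → ℝ := fun i j => ∑ p, γhat i p * (γstar p j / a p) with hγ'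
    have h'pos : ∀ i j, 0 ≤ γ' i j := fun i j =>
      Finset.sum_nonneg fun p _ =>
        mul_nonneg (hpos i p) (div_nonneg (hγpos p j) (ha p).le)
    have h'row : ∀ i, ∑ j, γ' i j = a i := by
      intro i
      rw [hγ']
      rw [Finset.sum_comm]
      calc ∑ p, ∑ j, γhat i p * (γstar p j / a p)
          = ∑ p, γhat i p := by
            refine Finset.sum_congr rfl fun p _ => ?_
            rw [← Finset.mul_sum, ← Finset.sum_div, hγrow p, div_self (ha p).ne',
              mul_one]
        _ = a i := hrow i
    have h'col : ∀ j, ∑ i, γ' i j = b j := by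
      intro j
      rw [hγ']
      rw [Finset.sum_comm]
      calc ∑ p, ∑ i, γhat i p * (γstar p j / a p)
          = ∑ p, γstar p j := by
            refine Finset.sum_congr rfl fun p _ => ?_
            rw [← Finset.sum_mul, hcol p, mul_comm, div_mul_cancel₀ _ (ha p).ne']
        _ = b j := hγcol j
    have hcoup' : IsCoupling a b γ' := ⟨h'pos, h'row, h'col⟩
    -- expansions
    have hF : ∑ i, ∑ p, ∑ k, ∑ q, γhat i p * γhat k q * (A i k - Cstar p q) ^ 2
        = SA - 2 * (∑ i, ∑ p, ∑ k, ∑ q,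
            γhat i p * γhat k q * (A i k * Cstar p q)) + SC :=
      gw_expand γhat a a hrow hcol A Cstar
    have hT : ∑ i, ∑ p, ∑ k, ∑ q, γhat i p * γhat k q * (A i k * Cstar p q)
        = ∑ i, ∑ j, ∑ k, ∑ l, γ' i j * γ' k l * (A i k * B j l) := by
      simp only [hCstar]
      exact cross_eq γhat (fun p j => γstar p j / a p) A B
    have hG1 : ∑ i, ∑ j, ∑ k, ∑ l, γstar i j * γstar k l * (A i k - B j l) ^ 2
        = SA - 2 * Xstar + SB := gw_expand γstar a b hγrow hγcol A B
    have hG2 : ∑ i, ∑ j, ∑ k, ∑ l, γ' i j * γ' k l * (A i k - B j l) ^ 2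
        = SA - 2 * (∑ i, ∑ j, ∑ k, ∑ l, γ' i j * γ' k l * (A i k * B j l)) + SB :=
      gw_expand γ' a b h'row h'col A B
    have hle := hopt γ' hcoup'
    have hX : ∑ i, ∑ j, ∑ k, ∑ l, γ' i j * γ' k l * (A i k * B j l) ≤ Xstar := by
      linarith [hle, hG1, hG2]
    linarith [hF, hT, htarget, hX]
  refine ⟨main, ?_⟩
  -- the identity coupling
  set γid : Fin n → Fin n → ℝ := fun i k => if i = k then a i else 0 with hγid
  have hidcoup : IsCoupling a a γid := by
    refine ⟨fun i j => ?_, fun i => ?_, fun j => ?_⟩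
    · rw [hγid]; dsimp only; split
      · exact (ha i).le
      · exact le_rfl
    · rw [hγid]; simp
    · rw [hγid]; simp [Finset.sum_ite_eq]
  have hidcost : ∑ i, ∑ p, ∑ k, ∑ q, γid i p * γid k q * (A i k - Cstar p q) ^ 2
      = ∑ i, ∑ k, a i * a k * (A i k - Cstar i k) ^ 2 := by
    rw [hγid]
    simp only [ite_mul, zero_mul, mul_ite, mul_zero, Finset.sum_ite_eq,
      Finset.mem_univ, if_true]
    refine Finset.sum_congr rfl fun i _ => ?_
    rw [Finset.sum_comm]
    simp [Finset.sum_ite_eq]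
  have hmem : (∑ i, ∑ k, a i * a k * (A i k - Cstar i k) ^ 2) ∈
      { c | ∃ γ : Fin n → Fin n → ℝ, IsCoupling a a γ ∧
        c = ∑ i, ∑ j, ∑ k, ∑ l, γ i j * γ k l * (A i k - Cstar j l) ^ 2 } :=
    ⟨γid, hidcoup, hidcost.symm⟩
  have hlb : ∀ c ∈ { c | ∃ γ : Fin n → Fin n → ℝ, IsCoupling a a γ ∧
        c = ∑ i, ∑ j, ∑ k, ∑ l, γ i j * γ k l * (A i k - Cstar j l) ^ 2 },
      (∑ i, ∑ k, a i * a k * (A i k - Cstar i k) ^ 2) ≤ c := by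
    rintro c ⟨γ, hγ, rfl⟩
    exact main γ hγ
  exact IsLeast.csInf_eq ⟨hmem, hlb⟩
end

section
/- Let γ* be a GW-optimal coupling between finite measure networks (X, A, a) and (Y, B, b) with aᵢ > 0, and let C*ᵢₖ = Σⱼₗ (γ*ᵢⱼ/aᵢ)(γ*ₖₗ/aₖ) Bⱼₗ denote the GW barycentric projection. Then GW₂²((X,A,a),(Y,B,b)) = GW₂²((X,A,a),(X,C*,a)) + (diam₂(Y,B,b)² − diam₂(X,C*,a)²), where diam₂(Y,B,b)² = Σⱼₗ bⱼ bₗ Bⱼₗ². -/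
open scoped BigOperators

section helpers
variable {α β γ' δ : Type*} [Fintype α] [Fintype β] [Fintype γ'] [Fintype δ]

lemma swap23 (f : α → β → γ' → δ → ℝ) :
    ∑ i, ∑ j, ∑ k, ∑ l, f i j k l = ∑ i, ∑ k, ∑ j, ∑ l, f i j k l :=
  Finset.sum_congr rfl fun _ _ => Finset.sum_comm

lemma swap3 (g : α → β → δ → ℝ) :
    ∑ x, ∑ y, ∑ z, g x y z = ∑ z, ∑ x, ∑ y, g x y z := by
  rw [show (∑ x, ∑ y, ∑ z, g x y z) = ∑ x, ∑ z, ∑ y, g x y z from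
    Finset.sum_congr rfl fun _ _ => Finset.sum_comm, Finset.sum_comm]

lemma swap3' (g : α → β → δ → ℝ) :
    ∑ x, ∑ y, ∑ z, g x y z = ∑ y, ∑ z, ∑ x, g x y z :=
  (swap3 fun y z x => g x y z).symm

lemma swap4 (f : α → β → γ' → δ → ℝ) :
    ∑ i, ∑ j, ∑ k, ∑ l, f i j k l = ∑ k, ∑ l, ∑ i, ∑ j, f i j k l := by
  calc ∑ i, ∑ j, ∑ k, ∑ l, f i j k l = ∑ i, ∑ k, ∑ l, ∑ j, f i j k l :=
        Finset.sum_congr rfl fun i _ => swap3' _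
    _ = ∑ k, ∑ i, ∑ l, ∑ j, f i j k l := Finset.sum_comm
    _ = ∑ k, ∑ l, ∑ i, ∑ j, f i j k l := Finset.sum_congr rfl fun _ _ => Finset.sum_comm

end helpers

section lemmas
variable {n m : ℕ} {a : Fin n → ℝ} {b : Fin m → ℝ} {γ : Fin n → Fin m → ℝ}

/-- Inner marginal: for fixed i k, summing γ i j * γ k l over j l gives a i * a k. -/
lemma inner_marg (hγ : IsCoupling a b γ) (F : Fin n → Fin n → ℝ) (i k : Fin n) :
    ∑ j, ∑ l, γ i j * γ k l * F i k = a i * a k * F i k := by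
  conv_rhs => rw [← hγ.2.1 i, ← hγ.2.1 k]
  rw [Finset.sum_mul_sum]
  simp only [Finset.sum_mul]

/-- S1: A-term. -/
lemma quad_A (hγ : IsCoupling a b γ) (F : Fin n → Fin n → ℝ) :
    ∑ i, ∑ j, ∑ k, ∑ l, γ i j * γ k l * F i k = ∑ i, ∑ k, a i * a k * F i k := by
  rw [swap23]
  exact Finset.sum_congr rfl fun i _ => Finset.sum_congr rfl fun k _ => inner_marg hγ F i k

/-- S3: B-term. -/
lemma quad_B (hγ : IsCoupling a b γ) (G : Fin m → Fin m → ℝ) :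
    ∑ i, ∑ j, ∑ k, ∑ l, γ i j * γ k l * G j l = ∑ j, ∑ l, b j * b l * G j l := by
  rw [swap23, swap4]
  refine Finset.sum_congr rfl fun j _ => Finset.sum_congr rfl fun l _ => ?_
  conv_rhs => rw [← hγ.2.2 j, ← hγ.2.2 l]
  rw [Finset.sum_mul_sum]
  simp only [Finset.sum_mul]

/-- S2: cross term factoring. -/
lemma quad_cross (γ : Fin n → Fin m → ℝ) (A : Fin n → Fin n → ℝ) (B : Fin m → Fin m → ℝ) :
    ∑ i, ∑ j, ∑ k, ∑ l, γ i j * γ k l * (A i k * B j l)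
      = ∑ i, ∑ k, A i k * ∑ j, ∑ l, γ i j * γ k l * B j l := by
  rw [swap23]
  refine Finset.sum_congr rfl fun i _ => Finset.sum_congr rfl fun k _ => ?_
  rw [Finset.mul_sum]
  refine Finset.sum_congr rfl fun j _ => ?_
  rw [Finset.mul_sum]
  exact Finset.sum_congr rfl fun l _ => by ring

/-- Master expansion of the GW cost. -/
lemma cost_expand (hγ : IsCoupling a b γ) (A : Fin n → Fin n → ℝ) (B : Fin m → Fin m → ℝ) :
    ∑ i, ∑ j, ∑ k, ∑ l, γ i j * γ k l * (A i k - B j l) ^ 2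
      = (∑ i, ∑ k, a i * a k * A i k ^ 2)
        - 2 * (∑ i, ∑ k, A i k * ∑ j, ∑ l, γ i j * γ k l * B j l)
        + ∑ j, ∑ l, b j * b l * B j l ^ 2 := by
  have key : ∑ i, ∑ j, ∑ k, ∑ l, γ i j * γ k l * (A i k - B j l) ^ 2
      = (∑ i, ∑ j, ∑ k, ∑ l, γ i j * γ k l * A i k ^ 2)
        - 2 * (∑ i, ∑ j, ∑ k, ∑ l, γ i j * γ k l * (A i k * B j l))
        + ∑ i, ∑ j, ∑ k, ∑ l, γ i j * γ k l * B j l ^ 2 := by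
    simp only [Finset.mul_sum, ← Finset.sum_sub_distrib, ← Finset.sum_add_distrib]
    refine Finset.sum_congr rfl fun i _ => Finset.sum_congr rfl fun j _ =>
      Finset.sum_congr rfl fun k _ => Finset.sum_congr rfl fun l _ => by ring
  rw [key, quad_A hγ, quad_B hγ, quad_cross]

end lemmas

noncomputable def diagCoupling {n : ℕ} (a : Fin n → ℝ) : Fin n → Fin n → ℝ :=
  fun i k => if i = k then a i else 0

lemma diag_isCoupling {n : ℕ} {a : Fin n → ℝ} (ha : ∀ i, 0 ≤ a i) :
    IsCoupling a a (diagCoupling a) := by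
  refine ⟨fun i j => ?_, fun i => ?_, fun j => ?_⟩
  · unfold diagCoupling; split <;> simp [ha i]
  · simp [diagCoupling, Finset.sum_ite_eq]
  · simp [diagCoupling, Finset.sum_ite_eq']

lemma diag_inner {n : ℕ} (a : Fin n → ℝ) (i k : Fin n) (C : Fin n → Fin n → ℝ) :
    ∑ j, ∑ l, diagCoupling a i j * diagCoupling a k l * C j l = a i * a k * C i k := by
  simp [diagCoupling, ite_mul, mul_ite, zero_mul, mul_zero, Finset.sum_ite_eq,
    Finset.mul_sum, mul_assoc]

section nu
variable {n m : ℕ} {a : Fin n → ℝ} {b : Fin m → ℝ}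
  {γstar : Fin n → Fin m → ℝ} {μ : Fin n → Fin n → ℝ}

lemma nu_isCoupling (ha : ∀ i, 0 < a i) (hγstar : IsCoupling a b γstar)
    (hμ : IsCoupling a a μ) :
    IsCoupling a b (fun i j => ∑ p, μ i p * γstar p j / a p) := by
  refine ⟨fun i j => Finset.sum_nonneg fun p _ =>
    div_nonneg (mul_nonneg (hμ.1 i p) (hγstar.1 p j)) (ha p).le, fun i => ?_, fun j => ?_⟩
  · rw [Finset.sum_comm]
    have hp : ∀ p, ∑ j, μ i p * γstar p j / a p = μ i p := by
      intro p
      calc ∑ j, μ i p * γstar p j / a p = ∑ j, (μ i p / a p) * γstar p j :=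
            Finset.sum_congr rfl fun j _ => by ring
        _ = (μ i p / a p) * a p := by rw [← Finset.mul_sum, hγstar.2.1]
        _ = μ i p := div_mul_cancel₀ _ (ha p).ne'
    rw [Finset.sum_congr rfl fun p _ => hp p, hμ.2.1]
  · rw [Finset.sum_comm]
    have hp : ∀ p, ∑ i, μ i p * γstar p j / a p = γstar p j := by
      intro p
      calc ∑ i, μ i p * γstar p j / a p = ∑ i, μ i p * (γstar p j / a p) :=
            Finset.sum_congr rfl fun i _ => by ring
        _ = a p * (γstar p j / a p) := by rw [← Finset.sum_mul, hμ.2.2]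
        _ = γstar p j := by rw [mul_div_cancel₀ _ (ha p).ne']
    rw [Finset.sum_congr rfl fun p _ => hp p, hγstar.2.2]

lemma nu_inner (ha : ∀ i, 0 < a i) {B : Fin m → Fin m → ℝ} {Cstar : Fin n → Fin n → ℝ}
    (haC : ∀ p q, ∑ j, ∑ l, γstar p j * γstar q l * B j l = a p * a q * Cstar p q)
    (i k : Fin n) :
    ∑ j, ∑ l, (∑ p, μ i p * γstar p j / a p) * (∑ q, μ k q * γstar q l / a q) * B j l
      = ∑ p, ∑ q, μ i p * μ k q * Cstar p q := by
  have hpt : ∀ j l, (∑ p, μ i p * γstar p j / a p) * (∑ q, μ k q * γstar q l / a q) * B j l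
      = ∑ p, ∑ q, (μ i p * γstar p j / a p) * (μ k q * γstar q l / a q) * B j l := by
    intro j l; rw [Finset.sum_mul_sum]; simp only [Finset.sum_mul]
  calc ∑ j, ∑ l, (∑ p, μ i p * γstar p j / a p) * (∑ q, μ k q * γstar q l / a q) * B j l
      = ∑ j, ∑ l, ∑ p, ∑ q, (μ i p * γstar p j / a p) * (μ k q * γstar q l / a q) * B j l :=
        Finset.sum_congr rfl fun j _ => Finset.sum_congr rfl fun l _ => hpt j l
    _ = ∑ p, ∑ q, ∑ j, ∑ l, (μ i p * γstar p j / a p) * (μ k q * γstar q l / a q) * B j l :=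
        swap4 _
    _ = ∑ p, ∑ q, μ i p * μ k q * Cstar p q := by
        refine Finset.sum_congr rfl fun p _ => Finset.sum_congr rfl fun q _ => ?_
        calc ∑ j, ∑ l, (μ i p * γstar p j / a p) * (μ k q * γstar q l / a q) * B j l
            = ∑ j, ∑ l, (μ i p / a p) * ((μ k q / a q) * (γstar p j * γstar q l * B j l)) :=
              Finset.sum_congr rfl fun j _ => Finset.sum_congr rfl fun l _ => by ring
          _ = (μ i p / a p) * ((μ k q / a q) * ∑ j, ∑ l, γstar p j * γstar q l * B j l) := by
              simp only [Finset.mul_sum]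
          _ = (μ i p / a p) * ((μ k q / a q) * (a p * a q * Cstar p q)) := by rw [haC]
          _ = μ i p * μ k q * Cstar p q := by
              have hp := (ha p).ne'
              have hq := (ha q).ne'
              field_simp

end nu


theorem gw_variance_decomposition {n m : ℕ}
    (a : Fin n → ℝ) (b : Fin m → ℝ)
    (A : Fin n → Fin n → ℝ) (B : Fin m → Fin m → ℝ)
    (ha : ∀ i, 0 < a i) (hasum : ∑ i, a i = 1)
    (hb : ∀ j, 0 ≤ b j) (hbsum : ∑ j, b j = 1)
    (γstar : Fin n → Fin m → ℝ) (hγstar : IsCoupling a b γstar)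
    (hopt : ∀ γ : Fin n → Fin m → ℝ, IsCoupling a b γ →
      ∑ i, ∑ j, ∑ k, ∑ l, γstar i j * γstar k l * (A i k - B j l) ^ 2
        ≤ ∑ i, ∑ j, ∑ k, ∑ l, γ i j * γ k l * (A i k - B j l) ^ 2)
    (Cstar : Fin n → Fin n → ℝ)
    (hCstar : ∀ i k, Cstar i k = ∑ j, ∑ l, (γstar i j / a i) * (γstar k l / a k) * B j l) :
    GW2sq a b A B
      = GW2sq a a A Cstar
        + (∑ j, ∑ l, b j * b l * B j l ^ 2 - ∑ i, ∑ k, a i * a k * Cstar i k ^ 2) := by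
  have haC : ∀ p q, ∑ j, ∑ l, γstar p j * γstar q l * B j l = a p * a q * Cstar p q := by
    intro p q
    rw [hCstar]
    simp only [Finset.mul_sum]
    refine Finset.sum_congr rfl fun j _ => Finset.sum_congr rfl fun l _ => ?_
    have hp := (ha p).ne'
    have hq := (ha q).ne'
    field_simp
  set TA := ∑ i, ∑ k, a i * a k * A i k ^ 2 with hTA
  set TB := ∑ j, ∑ l, b j * b l * B j l ^ 2 with hTB
  set TC := ∑ i, ∑ k, a i * a k * Cstar i k ^ 2 with hTC
  set XS := ∑ i, ∑ k, A i k * (a i * a k * Cstar i k) with hXS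
  have h1 : ∑ i, ∑ j, ∑ k, ∑ l, γstar i j * γstar k l * (A i k - B j l) ^ 2
      = TA - 2 * XS + TB := by
    rw [cost_expand hγstar A B,
      show (∑ i, ∑ k, A i k * ∑ j, ∑ l, γstar i j * γstar k l * B j l) = XS from
        Finset.sum_congr rfl fun i _ => Finset.sum_congr rfl fun k _ => by rw [haC]]
  have hGWab : GW2sq a b A B = TA - 2 * XS + TB := by
    refine IsLeast.csInf_eq ⟨⟨γstar, hγstar, h1.symm⟩, ?_⟩
    rintro c ⟨γ, hγ, rfl⟩
    exact h1 ▸ hopt γ hγ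
  have hdiagcost : ∑ i, ∑ j, ∑ k, ∑ l,
      diagCoupling a i j * diagCoupling a k l * (A i k - Cstar j l) ^ 2
        = TA - 2 * XS + TC := by
    rw [cost_expand (diag_isCoupling fun i => (ha i).le) A Cstar,
      show (∑ i, ∑ k, A i k * ∑ j, ∑ l, diagCoupling a i j * diagCoupling a k l * Cstar j l)
          = XS from
        Finset.sum_congr rfl fun i _ => Finset.sum_congr rfl fun k _ => by rw [diag_inner]]
  have hGWaa : GW2sq a a A Cstar = TA - 2 * XS + TC := by
    refine IsLeast.csInf_eq ⟨⟨diagCoupling a, diag_isCoupling fun i => (ha i).le,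
      hdiagcost.symm⟩, ?_⟩
    rintro c ⟨μ, hμ, rfl⟩
    rw [cost_expand hμ A Cstar]
    have hν := nu_isCoupling ha hγstar hμ
    have hle := hopt _ hν
    rw [h1, cost_expand hν A B] at hle
    have hcross : (∑ i, ∑ k, A i k *
        ∑ j, ∑ l, (∑ p, μ i p * γstar p j / a p) * (∑ q, μ k q * γstar q l / a q) * B j l)
          = ∑ i, ∑ k, A i k * ∑ j, ∑ l, μ i j * μ k l * Cstar j l := by
      refine Finset.sum_congr rfl fun i _ => Finset.sum_congr rfl fun k _ => ?_
      rw [nu_inner ha haC]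
    rw [hcross] at hle
    linarith
  rw [hGWab, hGWaa]
  ring
end

section
/- With γ ∈ U(a,b), aᵢ > 0, Bⱼₗ entrywise and Cᵢₖ = Σⱼₗ (γᵢⱼ/aᵢ)(γₖₗ/aₖ) Bⱼₗ, the squared 2-diameter does not increase under GW barycentric projection: Σᵢₖ aᵢ aₖ Cᵢₖ² ≤ Σⱼₗ bⱼ bₗ Bⱼₗ². -/
open scoped BigOperators

lemma jensen_sq {ι : Type*} [Fintype ι] (w x : ι → ℝ) (hw : ∀ i, 0 ≤ w i)
    (hsum : ∑ i, w i = 1) : (∑ i, w i * x i) ^ 2 ≤ ∑ i, w i * x i ^ 2 := by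
  have h := Finset.sum_mul_sq_le_sq_mul_sq Finset.univ
      (fun i => Real.sqrt (w i)) (fun i => Real.sqrt (w i) * x i)
  have e1 : ∀ i : ι, Real.sqrt (w i) * (Real.sqrt (w i) * x i) = w i * x i := by
    intro i; rw [← mul_assoc, Real.mul_self_sqrt (hw i)]
  have e2 : ∀ i : ι, Real.sqrt (w i) ^ 2 = w i := fun i => Real.sq_sqrt (hw i)
  have e3 : ∀ i : ι, (Real.sqrt (w i) * x i) ^ 2 = w i * x i ^ 2 := by
    intro i; rw [mul_pow, e2]
  simp only [e1, e2, e3, hsum, one_mul] at h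
  exact h

theorem gw_diameter_nonincreasing {n m : ℕ}
    (a : Fin n → ℝ) (b : Fin m → ℝ)
    (B : Fin m → Fin m → ℝ)
    (γ : Fin n → Fin m → ℝ)
    (ha : ∀ i, 0 < a i) (hasum : ∑ i, a i = 1)
    (hb : ∀ j, 0 ≤ b j) (hbsum : ∑ j, b j = 1)
    (hγ : IsCoupling a b γ)
    (C : Fin n → Fin n → ℝ)
    (hC : ∀ i k, C i k = ∑ j, ∑ l, (γ i j / a i) * (γ k l / a k) * B j l) :
    ∑ i, ∑ k, a i * a k * C i k ^ 2 ≤ ∑ j, ∑ l, b j * b l * B j l ^ 2 := by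
  obtain ⟨hγ0, hrow, hcol⟩ := hγ
  have hane : ∀ i, a i ≠ 0 := fun i => (ha i).ne'
  set p : Fin n → Fin m → ℝ := fun i j => γ i j / a i with hp
  have hpnn : ∀ i j, 0 ≤ p i j := fun i j => div_nonneg (hγ0 i j) (ha i).le
  have hps : ∀ i, ∑ j, p i j = 1 := by
    intro i; simp only [hp]; rw [← Finset.sum_div, hrow i, div_self (hane i)]
  have hap : ∀ i j, a i * p i j = γ i j := by
    intro i j; simp only [hp]; rw [mul_div_cancel₀ _ (hane i)]
  have key : ∀ i k, C i k ^ 2 ≤ ∑ j, ∑ l, p i j * p k l * B j l ^ 2 := by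
    intro i k
    have h := jensen_sq (ι := Fin m × Fin m) (fun q => p i q.1 * p k q.2)
      (fun q => B q.1 q.2) (fun q => mul_nonneg (hpnn _ _) (hpnn _ _)) ?_
    · rw [hC i k]
      simpa [Fintype.sum_prod_type] using h
    · rw [Fintype.sum_prod_type]
      simp only [← Finset.mul_sum, hps k]
      simpa using hps i
  calc ∑ i, ∑ k, a i * a k * C i k ^ 2
      ≤ ∑ i, ∑ k, a i * a k * (∑ j, ∑ l, p i j * p k l * B j l ^ 2) := by
        apply Finset.sum_le_sum; intro i _; apply Finset.sum_le_sum; intro k _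
        exact mul_le_mul_of_nonneg_left (key i k) (mul_nonneg (ha i).le (ha k).le)
    _ = ∑ i, ∑ k, ∑ j, ∑ l, γ i j * γ k l * B j l ^ 2 := by
        apply Finset.sum_congr rfl; intro i _; apply Finset.sum_congr rfl; intro k _
        rw [Finset.mul_sum]; apply Finset.sum_congr rfl; intro j _
        rw [Finset.mul_sum]; apply Finset.sum_congr rfl; intro l _
        rw [← hap i j, ← hap k l]; ring
    _ = ∑ j, ∑ l, ∑ i, ∑ k, γ i j * γ k l * B j l ^ 2 := by
        calc ∑ i, ∑ k, ∑ j, ∑ l, γ i j * γ k l * B j l ^ 2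
            = ∑ i, ∑ j, ∑ k, ∑ l, γ i j * γ k l * B j l ^ 2 :=
              Finset.sum_congr rfl (fun i _ => Finset.sum_comm)
          _ = ∑ j, ∑ i, ∑ k, ∑ l, γ i j * γ k l * B j l ^ 2 := Finset.sum_comm
          _ = ∑ j, ∑ i, ∑ l, ∑ k, γ i j * γ k l * B j l ^ 2 :=
              Finset.sum_congr rfl (fun j _ =>
                Finset.sum_congr rfl (fun i _ => Finset.sum_comm))
          _ = ∑ j, ∑ l, ∑ i, ∑ k, γ i j * γ k l * B j l ^ 2 :=
              Finset.sum_congr rfl (fun j _ => Finset.sum_comm)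
    _ = ∑ j, ∑ l, b j * b l * B j l ^ 2 := by
        apply Finset.sum_congr rfl; intro j _; apply Finset.sum_congr rfl; intro l _
        rw [← hcol j, ← hcol l]
        rw [Finset.sum_mul_sum, Finset.sum_mul]
        apply Finset.sum_congr rfl; intro i _
        rw [Finset.sum_mul]
end
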